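/- Let (X, ‖·‖) be a complex normed space and x, y ≠ 0 with a pure real angle ∠(x,y) = π/2 + a, where −π/2 ≤ a ≤ π/2. Then ∠(i·x, y) = π/2 + i·sgn(a)·(1/2)·arcosh( 2·cos²(π/2+a) + 1 ) = π/2 + i·sgn(a)·log[ √(cos²(π/2+a) + 1) + |cos(π/2+a)| ]; in particular ∠(i·x, y) has real part π/2. -/
import Mathlib


/-- The real area hyperbolic cosine, `arcosh x = log (x + √(x² − 1))`. -/
noncomputable def arcosh (x : ℝ) : ℝ := Real.log (x + Real.sqrt (x ^ 2 - 1))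

/-- `G₋ = √((r²+s²−1)² + 4s²) − (r²+s²)` for `z = r + i·s`. -/
noncomputable def Gminus (z : ℂ) : ℝ :=
  Real.sqrt ((z.re ^ 2 + z.im ^ 2 - 1) ^ 2 + 4 * z.im ^ 2) - (z.re ^ 2 + z.im ^ 2)

/-- `G₊ = √((r²+s²−1)² + 4s²) + (r²+s²)` for `z = r + i·s`. -/
noncomputable def Gplus (z : ℂ) : ℝ :=
  Real.sqrt ((z.re ^ 2 + z.im ^ 2 - 1) ^ 2 + 4 * z.im ^ 2) + (z.re ^ 2 + z.im ^ 2)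

/-- The complex arcsine: `arcsin(r+is) = ½·(sgn r · arccos G₋ + i · sgn s · arcosh G₊)`. -/
noncomputable def carcsin (z : ℂ) : ℂ :=
  (1 / 2 : ℂ) *
    (((Real.sign z.re * Real.arccos (Gminus z) : ℝ) : ℂ) +
      Complex.I * ((Real.sign z.im * arcosh (Gplus z) : ℝ) : ℂ))

/-- The complex arccosine: `arccos z = π/2 − arcsin z`. -/
noncomputable def carccos (z : ℂ) : ℂ := ((Real.pi / 2 : ℝ) : ℂ) - carcsin z
/-- The continuous product `⟨x|y⟩` in a complex normed space. -/
noncomputable def cprod {X : Type*} [NormedAddCommGroup X] [NormedSpace ℂ X] (x y : X) : ℂ :=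
  open scoped Classical in
  if x = 0 ∨ y = 0 then 0
  else
    ((‖x‖ * ‖y‖ : ℝ) : ℂ) * (1 / 4 : ℂ) *
      (((‖((‖x‖⁻¹ : ℝ) : ℂ) • x + ((‖y‖⁻¹ : ℝ) : ℂ) • y‖ ^ 2
          - ‖((‖x‖⁻¹ : ℝ) : ℂ) • x - ((‖y‖⁻¹ : ℝ) : ℂ) • y‖ ^ 2 : ℝ) : ℂ)
        + Complex.I *
          ((‖((‖x‖⁻¹ : ℝ) : ℂ) • x + Complex.I • (((‖y‖⁻¹ : ℝ) : ℂ) • y)‖ ^ 2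
            - ‖((‖x‖⁻¹ : ℝ) : ℂ) • x - Complex.I • (((‖y‖⁻¹ : ℝ) : ℂ) • y)‖ ^ 2 : ℝ) : ℂ))
/-- The complex angle `∠(x,y) = arccos(⟨x|y⟩ / (‖x‖·‖y‖))`. -/
noncomputable def cangle {X : Type*} [NormedAddCommGroup X] [NormedSpace ℂ X] (x y : X) : ℂ :=
  carccos (cprod x y / ((‖x‖ * ‖y‖ : ℝ) : ℂ))

section Helpers
variable {X : Type*} [NormedAddCommGroup X] [NormedSpace ℂ X]

lemma nIe1 (u v : X) : ‖Complex.I • u + v‖ = ‖u - Complex.I • v‖ := by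
  have h : Complex.I • u + v = Complex.I • (u - Complex.I • v) := by
    rw [smul_sub, smul_smul, Complex.I_mul_I, neg_one_smul, sub_neg_eq_add]
  rw [h, norm_smul, Complex.norm_I, one_mul]

lemma nIe2 (u v : X) : ‖Complex.I • u - v‖ = ‖u + Complex.I • v‖ := by
  have h : Complex.I • u - v = Complex.I • (u + Complex.I • v) := by
    rw [smul_add, smul_smul, Complex.I_mul_I, neg_one_smul, ← sub_eq_add_neg]
  rw [h, norm_smul, Complex.norm_I, one_mul]

lemma nIe3 (u v : X) : ‖Complex.I • u + Complex.I • v‖ = ‖u + v‖ := by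
  rw [← smul_add, norm_smul, Complex.norm_I, one_mul]

lemma nIe4 (u v : X) : ‖Complex.I • u - Complex.I • v‖ = ‖u - v‖ := by
  rw [← smul_sub, norm_smul, Complex.norm_I, one_mul]

lemma cprod_I_smul (x y : X) : cprod (Complex.I • x) y = Complex.I * cprod x y := by
  classical
  unfold cprod
  have hzero : Complex.I • x = 0 ↔ x = 0 := by
    simp [smul_eq_zero, Complex.I_ne_zero]
  by_cases hc : x = 0 ∨ y = 0
  · rw [if_pos (by tauto), if_pos (by rcases hc with h | h <;> simp [h, hzero])]
    ring
  · push_neg at hc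
    rw [if_neg (by simp [hzero, hc.1, hc.2]), if_neg (by simp [hc.1, hc.2])]
    have hnx : ‖Complex.I • x‖ = ‖x‖ := by rw [norm_smul, Complex.norm_I, one_mul]
    have hsm : ((‖Complex.I • x‖⁻¹ : ℝ) : ℂ) • (Complex.I • x)
        = Complex.I • (((‖x‖⁻¹ : ℝ) : ℂ) • x) := by
      rw [hnx, smul_comm]
    rw [hsm, hnx, nIe1, nIe2, nIe3, nIe4]
    push_cast
    ring_nf
    simp only [Complex.I_sq]
    ring

end Helpers

lemma arcosh_eq_two_log (r : ℝ) :
    arcosh (2 * r ^ 2 + 1) = 2 * Real.log (Real.sqrt (r ^ 2 + 1) + |r|) := by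
  unfold arcosh
  have h1 : (2 * r ^ 2 + 1) ^ 2 - 1 = (2 * |r| * Real.sqrt (r ^ 2 + 1)) ^ 2 := by
    rw [mul_pow, mul_pow, sq_abs, Real.sq_sqrt (by positivity)]
    ring
  rw [h1, Real.sqrt_sq (by positivity)]
  have h2 : 2 * r ^ 2 + 1 + 2 * |r| * Real.sqrt (r ^ 2 + 1)
      = (Real.sqrt (r ^ 2 + 1) + |r|) ^ 2 := by
    rw [add_sq, Real.sq_sqrt (by positivity), sq_abs]
    ring
  rw [h2, Real.log_pow]
  push_cast
  ring

lemma arcosh_pos {g : ℝ} (hg : 1 < g) : 0 < arcosh g := by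
  unfold arcosh
  apply Real.log_pos
  have : 0 ≤ Real.sqrt (g ^ 2 - 1) := Real.sqrt_nonneg _
  linarith

lemma main_calc (z : ℂ) (a : ℝ)
    (ha : -(Real.pi / 2) ≤ a) (ha' : a ≤ Real.pi / 2)
    (hre : |z.re| ≤ 1)
    (hangle : carccos z = ((Real.pi / 2 + a : ℝ) : ℂ)) :
    carccos (Complex.I * z) =
        ((Real.pi / 2 : ℝ) : ℂ) + Complex.I *
          ((Real.sign a * (1 / 2) * arcosh (2 * Real.cos (Real.pi / 2 + a) ^ 2 + 1) : ℝ) : ℂ) ∧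
    carccos (Complex.I * z) =
        ((Real.pi / 2 : ℝ) : ℂ) + Complex.I *
          ((Real.sign a *
            Real.log (Real.sqrt (Real.cos (Real.pi / 2 + a) ^ 2 + 1)
              + |Real.cos (Real.pi / 2 + a)|) : ℝ) : ℂ) ∧
    (carccos (Complex.I * z)).re = Real.pi / 2 := by
  have hrsq : z.re ^ 2 ≤ 1 := by
    have := sq_abs z.re ▸ pow_le_pow_left₀ (abs_nonneg z.re) hre 2
    simpa [sq_abs] using this
  -- imaginary part of hangle gives z.im = 0
  have him0 : z.im = 0 ∨ arcosh (Gplus z) = 0 := by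
    have h := congrArg Complex.im hangle
    unfold carccos carcsin at h
    simp [Complex.sub_im, Complex.mul_im, Complex.add_im, Complex.ofReal_im,
      Complex.ofReal_re, Complex.I_re, Complex.I_im] at h
    rcases h with h | h
    · exact Or.inl h
    · exact Or.inr h
  have hzim : z.im = 0 := by
    by_contra h
    have harc : arcosh (Gplus z) = 0 := him0.resolve_left h
    have hG : 1 < Gplus z := by
      unfold Gplus
      have h4 : 0 < 4 * z.im ^ 2 := by positivity
      have hsq : |z.re ^ 2 + z.im ^ 2 - 1| <
          Real.sqrt ((z.re ^ 2 + z.im ^ 2 - 1) ^ 2 + 4 * z.im ^ 2) := by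
        rw [← Real.sqrt_sq_eq_abs]
        exact Real.sqrt_lt_sqrt (by positivity) (by linarith)
      have := neg_abs_le (z.re ^ 2 + z.im ^ 2 - 1)
      nlinarith [abs_nonneg (z.re ^ 2 + z.im ^ 2 - 1)]
    exact absurd harc (ne_of_gt (arcosh_pos hG))
  -- real part of hangle
  have ha_eq : a = -(1 / 2) * (Real.sign z.re * Real.arccos (Gminus z)) := by
    have h := congrArg Complex.re hangle
    unfold carccos carcsin at h
    simp [Complex.sub_re, Complex.mul_re, Complex.add_re, Complex.ofReal_re,
      Complex.ofReal_im, Complex.I_re, Complex.I_im] at h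
    linarith
  -- Gminus z = 1 - 2 r^2
  have hGm : Gminus z = 1 - 2 * z.re ^ 2 := by
    unfold Gminus
    rw [hzim]
    have : (z.re ^ 2 + 0 ^ 2 - 1) ^ 2 + 4 * 0 ^ 2 = (z.re ^ 2 - 1) ^ 2 := by ring
    rw [this, Real.sqrt_sq_eq_abs, abs_of_nonpos (by linarith)]
    ring
  -- sin a = -z.re
  have key : ∀ t : ℝ, 0 ≤ t → t ≤ 1 → Real.sin (Real.arccos (1 - 2 * t ^ 2) / 2) = t := by
    intro t ht ht1
    have hb1 : (-1 : ℝ) ≤ 1 - 2 * t ^ 2 := by nlinarith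
    have hb2 : 1 - 2 * t ^ 2 ≤ 1 := by nlinarith
    rw [Real.sin_half_eq_sqrt (Real.arccos_nonneg _)
        (by linarith [Real.arccos_le_pi (1 - 2 * t ^ 2), Real.pi_pos]),
      Real.cos_arccos hb1 hb2]
    have : (1 - (1 - 2 * t ^ 2)) / 2 = t ^ 2 := by ring
    rw [this, Real.sqrt_sq ht]
  have hsin : Real.sin a = -z.re := by
    rcases lt_trichotomy z.re 0 with hlt | heq | hgt
    · have hs : Real.sign z.re = -1 := Real.sign_of_neg hlt
      have haa : a = Real.arccos (1 - 2 * (-z.re) ^ 2) / 2 := by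
        rw [ha_eq, hGm, hs]; ring_nf
      rw [haa, key (-z.re) (by linarith) (by rw [abs_of_neg hlt] at hre; linarith)]
    · have haa : a = 0 := by rw [ha_eq, heq, Real.sign_zero]; ring
      rw [haa, heq, Real.sin_zero, neg_zero]
    · have hs : Real.sign z.re = 1 := Real.sign_of_pos hgt
      have haa : a = -(Real.arccos (1 - 2 * z.re ^ 2) / 2) := by
        rw [ha_eq, hGm, hs]; ring
      rw [haa, Real.sin_neg, key z.re (by linarith) (by rw [abs_of_pos hgt] at hre; linarith)]
  have hpi := Real.pi_pos
  have hsign : Real.sign a = -Real.sign z.re := by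
    rcases lt_trichotomy z.re 0 with hlt | heq | hgt
    · have hapos : 0 < a := by
        by_contra h
        push_neg at h
        have h1 : Real.sin (-a) ≥ 0 :=
          Real.sin_nonneg_of_nonneg_of_le_pi (by linarith) (by linarith)
        rw [Real.sin_neg, hsin] at h1
        linarith
      rw [Real.sign_of_pos hapos, Real.sign_of_neg hlt]; ring
    · have haa : a = 0 := by rw [ha_eq, heq, Real.sign_zero]; ring
      rw [haa, heq, Real.sign_zero]; ring
    · have haneg : a < 0 := by
        by_contra h
        push_neg at h
        have h1 : Real.sin a ≥ 0 :=
          Real.sin_nonneg_of_nonneg_of_le_pi h (by linarith)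
        rw [hsin] at h1
        linarith
      rw [Real.sign_of_neg haneg, Real.sign_of_pos hgt]
  have hcos : Real.cos (Real.pi / 2 + a) = z.re := by
    rw [Real.cos_add, Real.cos_pi_div_two, Real.sin_pi_div_two, hsin]; ring
  -- compute carccos (I * z)
  have hIre : (Complex.I * z).re = 0 := by simp [Complex.mul_re, hzim]
  have hIim : (Complex.I * z).im = z.re := by simp [Complex.mul_im, hzim]
  have hGp : Gplus (Complex.I * z) = 2 * z.re ^ 2 + 1 := by
    unfold Gplus
    rw [hIre, hIim]
    have h5 : ((0:ℝ) ^ 2 + z.re ^ 2 - 1) ^ 2 + 4 * z.re ^ 2 = (z.re ^ 2 + 1) ^ 2 := by ring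
    rw [h5, Real.sqrt_sq (by positivity)]
    ring
  have hval : carccos (Complex.I * z) = ((Real.pi / 2 : ℝ) : ℂ) -
      (1 / 2 : ℂ) * (Complex.I * ((Real.sign z.re * arcosh (2 * z.re ^ 2 + 1) : ℝ) : ℂ)) := by
    unfold carccos carcsin
    rw [hIre, hIim, hGp, Real.sign_zero]
    push_cast
    ring
  refine ⟨?_, ?_, ?_⟩
  · rw [hval, hcos, hsign]
    push_cast
    ring
  · rw [hval, hcos, hsign, arcosh_eq_two_log z.re]
    push_cast
    ring
  · rw [hval]
    simp


/-- if `∠(x,y) = π/2 + a` is pure real with `−π/2 ≤ a ≤ π/2`, then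
`∠(i·x,y) = π/2 + i·sgn(a)·½·arcosh(2·cos²(π/2+a) + 1)
         = π/2 + i·sgn(a)·log(√(cos²(π/2+a)+1) + |cos(π/2+a)|)`,
which has real part `π/2`. -/
theorem stmt13 {X : Type*} [NormedAddCommGroup X] [NormedSpace ℂ X] (x y : X)
    (hx : x ≠ 0) (hy : y ≠ 0) (a : ℝ)
    (ha : -(Real.pi / 2) ≤ a) (ha' : a ≤ Real.pi / 2)
    (hangle : cangle x y = ((Real.pi / 2 + a : ℝ) : ℂ)) :
    cangle (Complex.I • x) y =
        ((Real.pi / 2 : ℝ) : ℂ) + Complex.I *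
          ((Real.sign a * (1 / 2) * arcosh (2 * Real.cos (Real.pi / 2 + a) ^ 2 + 1) : ℝ) : ℂ) ∧
    cangle (Complex.I • x) y =
        ((Real.pi / 2 : ℝ) : ℂ) + Complex.I *
          ((Real.sign a *
            Real.log (Real.sqrt (Real.cos (Real.pi / 2 + a) ^ 2 + 1)
              + |Real.cos (Real.pi / 2 + a)|) : ℝ) : ℂ) ∧
    (cangle (Complex.I • x) y).re = Real.pi / 2 := by
  classical
  have hnx : (0:ℝ) < ‖x‖ := norm_pos_iff.mpr hx
  have hny : (0:ℝ) < ‖y‖ := norm_pos_iff.mpr hy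
  have hN : ((‖x‖ * ‖y‖ : ℝ) : ℂ) ≠ 0 := by
    simp [ne_of_gt hnx, ne_of_gt hny]
  set u : X := ((‖x‖⁻¹ : ℝ) : ℂ) • x with hu
  set v : X := ((‖y‖⁻¹ : ℝ) : ℂ) • y with hv
  set C : ℝ := ‖u + v‖ ^ 2 - ‖u - v‖ ^ 2 with hC
  set D : ℝ := ‖u + Complex.I • v‖ ^ 2 - ‖u - Complex.I • v‖ ^ 2 with hD
  set z : ℂ := cprod x y / ((‖x‖ * ‖y‖ : ℝ) : ℂ) with hzdef
  have hcp : cprod x y = ((‖x‖ * ‖y‖ : ℝ) : ℂ) * ((1 / 4 : ℂ) * (((C : ℝ) : ℂ) + Complex.I * ((D : ℝ) : ℂ))) := by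
    unfold cprod
    rw [if_neg (by simp [hx, hy]), ← hu, ← hv, ← hC, ← hD]
    ring
  have hz : z = (1 / 4 : ℂ) * (((C : ℝ) : ℂ) + Complex.I * ((D : ℝ) : ℂ)) := by
    rw [hzdef, hcp, mul_div_cancel_left₀ _ hN]
  have hzre : z.re = C / 4 := by
    rw [hz]; simp [Complex.mul_re, Complex.add_re, Complex.mul_im]; ring
  have hnu : ‖u‖ = 1 := by
    rw [hu, norm_smul, Complex.norm_real, Real.norm_eq_abs,
      abs_of_pos (inv_pos.mpr hnx), inv_mul_cancel₀ (ne_of_gt hnx)]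
  have hnv : ‖v‖ = 1 := by
    rw [hv, norm_smul, Complex.norm_real, Real.norm_eq_abs,
      abs_of_pos (inv_pos.mpr hny), inv_mul_cancel₀ (ne_of_gt hny)]
  have hre : |z.re| ≤ 1 := by
    rw [hzre, abs_le]
    have h1 : ‖u + v‖ ≤ 2 := by
      calc ‖u + v‖ ≤ ‖u‖ + ‖v‖ := norm_add_le u v
        _ = 2 := by rw [hnu, hnv]; norm_num
    have h2 : ‖u - v‖ ≤ 2 := by
      calc ‖u - v‖ ≤ ‖u‖ + ‖v‖ := norm_sub_le u v
        _ = 2 := by rw [hnu, hnv]; norm_num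
    have h3 : (0:ℝ) ≤ ‖u + v‖ := norm_nonneg _
    have h4 : (0:ℝ) ≤ ‖u - v‖ := norm_nonneg _
    constructor <;> [nlinarith [sq_nonneg ‖u + v‖]; nlinarith [sq_nonneg ‖u - v‖]]
  have hci : cangle (Complex.I • x) y = carccos (Complex.I * z) := by
    unfold cangle
    rw [cprod_I_smul, norm_smul, Complex.norm_I, one_mul, mul_div_assoc, hzdef]
  have hmain := main_calc z a ha ha' hre hangle
  rw [hci]
  exact ⟨hmain.1, hmain.2.1, hmain.2.2⟩
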